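/- arXiv:0711.0562 — 5 statements merged into one kernel-verified Lean document; each statement's English description precedes it below -/
import Mathlib

section
/- For every $x \in \mathbb{R}^3$ with $x \ne 0$, the convolution of the Yukawa potential with the Coulomb potential satisfies $\int_{\mathbb{R}^3} \frac{e^{-|y|}}{|y|\,|x-y|}\, dy = \frac{4\pi}{|x|}\left(1 - e^{-|x|}\right)$. -/
/-!
In spherical coordinates about the axis through `x`, with `R = ‖x‖`, the angular integral is
Newton's shell computation: `∫₀^π sin θ / √(r² + R² - 2Rr cos θ) dθ = 2 min(r, R) / (Rr)`,
read off from the antiderivative `√(r² + R² - 2Rr cos θ) / (Rr)`. What remains is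
`4π/R ∫₀^∞ e^{-r} min(r, R) dr = 4π/R (1 - e^{-R})`.

Spherical coordinates arise by rotating `x` onto the first axis, taking polar coordinates in the
two remaining coordinates and then polar coordinates in the resulting half-plane. Working with
lower Lebesgue integrals, Tonelli and the changes of variables need no integrability hypotheses.
-/

open MeasureTheory Real Set Function
open scoped ENNReal

theorem sqrt_sq_add_sq_polarCoord_symm {p : ℝ × ℝ} (hp : 0 ≤ p.1) :
    √((polarCoord.symm p).1 ^ 2 + (polarCoord.symm p).2 ^ 2) = p.1 := by
  rw [polarCoord_symm_apply, mul_pow, mul_pow, ← mul_add, cos_sq_add_sin_sq, mul_one,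
    sqrt_sq hp]

theorem lintegral_comp_sqrt_sq_add_sq {h : ℝ → ℝ≥0∞} (hh : Measurable h) :
    ∫⁻ w : ℝ × ℝ, h √(w.1 ^ 2 + w.2 ^ 2)
      = ENNReal.ofReal (2 * π) * ∫⁻ s in Ioi 0, ENNReal.ofReal s * h s := by
  rw [← lintegral_comp_polarCoord_symm, polarCoord_target, Measure.volume_eq_prod,
    ← Measure.prod_restrict]
  calc ∫⁻ p, ENNReal.ofReal p.1 • h √((polarCoord.symm p).1 ^ 2 + (polarCoord.symm p).2 ^ 2)
        ∂(volume.restrict (Ioi 0)).prod (volume.restrict (Ioo (-π) π))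
      = ∫⁻ p, ENNReal.ofReal p.1 * h p.1 * 1
        ∂(volume.restrict (Ioi 0)).prod (volume.restrict (Ioo (-π) π)) := by
        rw [Measure.prod_restrict]
        refine setLIntegral_congr_fun (measurableSet_Ioi.prod measurableSet_Ioo) fun p hp ↦ ?_
        rw [sqrt_sq_add_sq_polarCoord_symm (le_of_lt hp.1), smul_eq_mul, mul_one]
    _ = ENNReal.ofReal (2 * π) * ∫⁻ s in Ioi 0, ENNReal.ofReal s * h s := by
        rw [lintegral_prod_mul (f := fun s ↦ ENNReal.ofReal s * h s) (g := fun _ ↦ 1)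
          (by fun_prop) aemeasurable_const, setLIntegral_const, one_mul, Real.volume_Ioo,
          mul_comm, sub_neg_eq_add, two_mul]

theorem lintegral_prod_comp_sqrt_sq_add_sq {f : ℝ → ℝ → ℝ≥0∞}
    (hf : Measurable (uncurry f)) :
    ∫⁻ p : ℝ × ℝ × ℝ, f p.1 √(p.2.1 ^ 2 + p.2.2 ^ 2)
      = ENNReal.ofReal (2 * π) * ∫⁻ z, ∫⁻ s in Ioi 0, ENNReal.ofReal s * f z s := by
  rw [Measure.volume_eq_prod, lintegral_prod _ (by fun_prop),
    ← lintegral_const_mul' _ _ ENNReal.ofReal_ne_top]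
  congr 1 with z
  exact lintegral_comp_sqrt_sq_add_sq hf.of_uncurry_left

theorem polarCoord_symm_mem_upperHalfPlane_iff {p : ℝ × ℝ} (hp : p ∈ polarCoord.target) :
    polarCoord.symm p ∈ univ ×ˢ Ioi 0 ↔ p ∈ Ioi 0 ×ˢ Ioo 0 π := by
  rw [polarCoord_target] at hp
  obtain ⟨hr : 0 < p.1, hθ⟩ := hp
  simp only [polarCoord_symm_apply, mem_prod, mem_univ, true_and, mem_Ioi, hr,
    mul_pos_iff_of_pos_left hr, mem_Ioo]
  refine ⟨fun hsin ↦ ⟨?_, hθ.2⟩, fun hθ' ↦ sin_pos_of_pos_of_lt_pi hθ'.1 hθ'.2⟩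
  by_contra! hθ0
  exact (sin_nonpos_of_nonpos_of_neg_pi_le hθ0 hθ.1.le).not_gt hsin

theorem Ioi_prod_Ioo_subset_polarCoord_target : Ioi 0 ×ˢ Ioo 0 π ⊆ polarCoord.target := by
  rw [polarCoord_target]
  exact prod_mono subset_rfl (Ioo_subset_Ioo_left (by linarith [pi_pos]))

theorem setLIntegral_upperHalfPlane_eq_polar (g : ℝ × ℝ → ℝ≥0∞) :
    ∫⁻ q in univ ×ˢ Ioi 0, g q
      = ∫⁻ p in Ioi 0 ×ˢ Ioo 0 π, ENNReal.ofReal p.1 * g (polarCoord.symm p) := by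
  have hS : MeasurableSet (Ioi (0 : ℝ) ×ˢ Ioo 0 π) := measurableSet_Ioi.prod measurableSet_Ioo
  rw [← lintegral_indicator (MeasurableSet.univ.prod (measurableSet_Ioi (a := (0 : ℝ)))),
    ← lintegral_comp_polarCoord_symm,
    setLIntegral_congr_fun polarCoord.open_target.measurableSet
      (g := (Ioi 0 ×ˢ Ioo 0 π).indicator fun p ↦ ENNReal.ofReal p.1 * g (polarCoord.symm p)),
    setLIntegral_indicator hS, inter_eq_left.mpr Ioi_prod_Ioo_subset_polarCoord_target]
  intro p hp
  dsimp only
  by_cases h : p ∈ Ioi 0 ×ˢ Ioo 0 π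
  · rw [indicator_of_mem h, indicator_of_mem ((polarCoord_symm_mem_upperHalfPlane_iff hp).2 h),
      smul_eq_mul]
  · rw [indicator_of_notMem h,
      indicator_of_notMem (mt (polarCoord_symm_mem_upperHalfPlane_iff hp).1 h), smul_zero]

theorem EuclideanSpace.measurePreserving_fin_three :
    MeasurePreserving (fun y : EuclideanSpace ℝ (Fin 3) ↦ (y 0, y 1, y 2)) := by
  have h : MeasurePreserving
      ((MeasurableEquiv.refl ℝ).prodCongr (MeasurableEquiv.finTwoArrow (α := ℝ))) := by
    rw [Measure.volume_eq_prod ℝ (Fin 2 → ℝ), Measure.volume_eq_prod ℝ (ℝ × ℝ)]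
    exact (MeasurePreserving.id volume).prod (volume_preserving_finTwoArrow ℝ)
  exact h.comp ((volume_preserving_piFinSuccAbove (fun _ : Fin 3 ↦ ℝ) 0).comp
    (EuclideanSpace.volume_preserving_symm_measurableEquiv_toLp (Fin 3)))

theorem EuclideanSpace.norm_fin_three (y : EuclideanSpace ℝ (Fin 3)) :
    ‖y‖ = √(y 0 ^ 2 + (y 1 ^ 2 + y 2 ^ 2)) := by
  rw [EuclideanSpace.norm_eq, Fin.sum_univ_three, ← add_assoc]
  simp only [Real.norm_eq_abs, sq_abs]

theorem norm_sub_eq_sqrt_inner_normalize {E : Type*} [NormedAddCommGroup E]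
    [InnerProductSpace ℝ E] (x y : E) :
    ‖x - y‖ = √(‖y‖ ^ 2 + ‖x‖ ^ 2 - 2 * ‖x‖ * inner ℝ (‖x‖⁻¹ • x) y) := by
  rcases eq_or_ne x 0 with rfl | hx
  · simp
  rw [← sqrt_sq (norm_nonneg (x - y)), norm_sub_sq_real, real_inner_smul_left, mul_assoc 2,
    mul_inv_cancel_left₀ (norm_ne_zero_iff.mpr hx)]
  ring_nf

theorem lintegral_comp_norm_inner {F : ℝ → ℝ → ℝ≥0∞} (hF : Measurable (uncurry F))
    {u : EuclideanSpace ℝ (Fin 3)} (hu : ‖u‖ = 1) :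
    ∫⁻ y, F ‖y‖ (inner ℝ u y) = ENNReal.ofReal (2 * π) * ∫⁻ r in Ioi 0,
      ∫⁻ θ in Ioo 0 π, ENNReal.ofReal (r ^ 2 * sin θ) * F r (r * cos θ) := by
  set e₀ : EuclideanSpace ℝ (Fin 3) := EuclideanSpace.single 0 1
  set T := (ℝ ∙ (u - e₀))ᗮ.reflection
  have hTu : T u = e₀ := Submodule.reflection_sub (by simp [e₀, hu])
  set G : ℝ → ℝ → ℝ≥0∞ := fun z s ↦ F √(z ^ 2 + s ^ 2) z
  have hG : Measurable (uncurry G) :=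
    hF.comp (f := fun p : ℝ × ℝ ↦ (√(p.1 ^ 2 + p.2 ^ 2), p.1)) (by fun_prop)
  calc ∫⁻ y, F ‖y‖ (inner ℝ u y) = ∫⁻ y, F ‖T y‖ ((T y) 0) := by
        congr with y
        rw [T.norm_map, ← T.inner_map_map, hTu, EuclideanSpace.inner_single_left]
        simp
    _ = ∫⁻ y : EuclideanSpace ℝ (Fin 3), F ‖y‖ (y 0) :=
        T.measurePreserving.lintegral_comp_emb T.toMeasurableEquiv.measurableEmbedding
          (fun y ↦ F ‖y‖ (y 0))
    _ = ∫⁻ y : EuclideanSpace ℝ (Fin 3), G (y 0) √(y 1 ^ 2 + y 2 ^ 2) := by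
        congr with y
        rw [EuclideanSpace.norm_fin_three]
        simp only [G, sq_sqrt (add_nonneg (sq_nonneg (y 1)) (sq_nonneg (y 2)))]
    _ = ∫⁻ p : ℝ × ℝ × ℝ, G p.1 √(p.2.1 ^ 2 + p.2.2 ^ 2) :=
        EuclideanSpace.measurePreserving_fin_three.lintegral_comp
          (f := fun p ↦ G p.1 √(p.2.1 ^ 2 + p.2.2 ^ 2)) (by fun_prop)
    _ = ENNReal.ofReal (2 * π) * ∫⁻ q in univ ×ˢ Ioi 0, ENNReal.ofReal q.2 * G q.1 q.2 := by
        rw [lintegral_prod_comp_sqrt_sq_add_sq hG, Measure.volume_eq_prod,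
          ← Measure.prod_restrict, Measure.restrict_univ, lintegral_prod _ (by fun_prop)]
    _ = ENNReal.ofReal (2 * π) * ∫⁻ r in Ioi 0,
          ∫⁻ θ in Ioo 0 π, ENNReal.ofReal (r ^ 2 * sin θ) * F r (r * cos θ) := by
        rw [setLIntegral_upperHalfPlane_eq_polar, Measure.volume_eq_prod,
          ← Measure.prod_restrict, lintegral_prod _ (by fun_prop),
          setLIntegral_congr_fun measurableSet_Ioi]
        intro r (hr : 0 < r)
        refine lintegral_congr fun θ ↦ ?_
        simp only [G]
        rw [sqrt_sq_add_sq_polarCoord_symm (p := (r, θ)) hr.le]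
        simp only [polarCoord_symm_apply, ← mul_assoc, ← ENNReal.ofReal_mul hr.le]
        ring_nf

theorem sq_add_sq_sub_two_mul_mul_cos_pos {r R : ℝ} (hrR : r ≠ R) (hr : 0 ≤ r) (hR : 0 ≤ R)
    (θ : ℝ) : 0 < r ^ 2 + R ^ 2 - 2 * R * r * cos θ := by
  have := sq_pos_of_ne_zero (sub_ne_zero.mpr hrR)
  nlinarith [mul_nonneg (mul_nonneg hR hr) (sub_nonneg.mpr (cos_le_one θ))]

theorem integral_sin_div_sqrt {r R : ℝ} (hr : 0 < r) (hR : 0 < R) (hrR : r ≠ R) :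
    ∫ θ in 0..π, sin θ / √(r ^ 2 + R ^ 2 - 2 * R * r * cos θ) = 2 * min r R / (R * r) := by
  have hpos := sq_add_sq_sub_two_mul_mul_cos_pos hrR hr.le hR.le
  have hderiv (θ : ℝ) : HasDerivAt (fun t ↦ √(r ^ 2 + R ^ 2 - 2 * R * r * cos t) / (R * r))
      (sin θ / √(r ^ 2 + R ^ 2 - 2 * R * r * cos θ)) θ := by
    have hg : HasDerivAt (fun t ↦ r ^ 2 + R ^ 2 - 2 * R * r * cos t) (2 * R * r * sin θ) θ := by
      simpa using ((hasDerivAt_cos θ).const_mul (2 * R * r)).const_sub (r ^ 2 + R ^ 2)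
    have hsqrt_ne := (sqrt_pos.mpr (hpos θ)).ne'
    refine ((hg.sqrt (hpos θ).ne').div_const (R * r)).congr_deriv ?_
    field_simp
  have hcont : Continuous fun θ ↦ sin θ / √(r ^ 2 + R ^ 2 - 2 * R * r * cos θ) :=
    continuous_sin.div (by fun_prop) fun θ ↦ (sqrt_pos.mpr (hpos θ)).ne'
  rw [intervalIntegral.integral_eq_sub_of_hasDerivAt (fun θ _ ↦ hderiv θ)
    (hcont.intervalIntegrable _ _), cos_pi, cos_zero, ← sub_div]
  have h₀ : r ^ 2 + R ^ 2 - 2 * R * r * 1 = (r - R) ^ 2 := by ring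
  have hπ : r ^ 2 + R ^ 2 - 2 * R * r * -1 = (r + R) ^ 2 := by ring
  rw [h₀, hπ, sqrt_sq (by positivity), sqrt_sq_eq_abs]
  congr 1
  rcases le_total r R with h | h
  · rw [abs_of_nonpos (sub_nonpos.mpr h), min_eq_left h]; ring
  · rw [abs_of_nonneg (sub_nonneg.mpr h), min_eq_right h]; ring

theorem lintegral_sin_div_sqrt {r R : ℝ} (hr : 0 < r) (hR : 0 < R) (hrR : r ≠ R) :
    ∫⁻ θ in Ioo 0 π, ENNReal.ofReal (sin θ / √(r ^ 2 + R ^ 2 - 2 * R * r * cos θ))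
      = ENNReal.ofReal (2 * min r R / (R * r)) := by
  have hpos := sq_add_sq_sub_two_mul_mul_cos_pos hrR hr.le hR.le
  have hcont : Continuous fun θ ↦ sin θ / √(r ^ 2 + R ^ 2 - 2 * R * r * cos θ) :=
    continuous_sin.div (by fun_prop) fun θ ↦ (sqrt_pos.mpr (hpos θ)).ne'
  rw [← integral_sin_div_sqrt hr hR hrR, intervalIntegral.integral_of_le pi_pos.le,
    integral_Ioc_eq_integral_Ioo, ofReal_integral_eq_lintegral_ofReal]
  · exact (hcont.integrableOn_Icc).mono_set Ioo_subset_Icc_self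
  · filter_upwards [ae_restrict_mem measurableSet_Ioo] with θ hθ
    exact div_nonneg (sin_nonneg_of_nonneg_of_le_pi hθ.1.le hθ.2.le) (sqrt_nonneg _)

theorem lintegral_exp_neg_mul_min {R : ℝ} (hR : 0 ≤ R) :
    ∫⁻ r in Ioi 0, ENNReal.ofReal (exp (-r) * min r R) = ENNReal.ofReal (1 - exp (-R)) := by
  have hright : EqOn (fun r ↦ exp (-r) * min r R) (fun r ↦ exp (-r) * R) (Ioi R) :=
    fun r (hr : R < r) ↦ by simp only [min_eq_right hr.le]
  have hleft : EqOn (fun r ↦ exp (-r) * min r R) (fun r ↦ exp (-r) * r) (Ioc 0 R) :=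
    fun r hr ↦ by simp only [min_eq_left hr.2]
  have hintegrable_left : IntegrableOn (fun r ↦ exp (-r) * min r R) (Ioc 0 R) :=
    (by fun_prop : Continuous fun r ↦ exp (-r) * min r R).integrableOn_Ioc
  have hintegrable_right : IntegrableOn (fun r ↦ exp (-r) * min r R) (Ioi R) :=
    IntegrableOn.congr_fun ((integrableOn_exp_neg_Ioi R).mul_const R) hright.symm
      measurableSet_Ioi
  have hantideriv (r : ℝ) : HasDerivAt (fun t ↦ -(1 + t) * exp (-t)) (exp (-r) * r) r := by
    have := ((hasDerivAt_id r).const_add 1).neg.mul (hasDerivAt_neg r).exp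
    exact this.congr_deriv (by simp only [id_eq, Pi.neg_apply]; ring)
  have hintegral_left : ∫ r in Ioc 0 R, exp (-r) * min r R = 1 - (1 + R) * exp (-R) := by
    rw [setIntegral_congr_fun measurableSet_Ioc hleft, ← intervalIntegral.integral_of_le hR,
      intervalIntegral.integral_eq_sub_of_hasDerivAt (fun r _ ↦ hantideriv r)
        ((by fun_prop : Continuous fun r ↦ exp (-r) * r).intervalIntegrable _ _)]
    rw [neg_zero, exp_zero]
    ring
  have hintegral_right : ∫ r in Ioi R, exp (-r) * min r R = R * exp (-R) := by
    rw [setIntegral_congr_fun measurableSet_Ioi hright, integral_mul_const, integral_exp_neg_Ioi,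
      mul_comm]
  rw [← Ioc_union_Ioi_eq_Ioi hR, ← ofReal_integral_eq_lintegral_ofReal
    (hintegrable_left.union hintegrable_right),
    setIntegral_union Ioc_disjoint_Ioi_same measurableSet_Ioi hintegrable_left hintegrable_right,
    hintegral_left, hintegral_right]
  · ring_nf
  · filter_upwards [ae_restrict_mem (measurableSet_Ioc.union measurableSet_Ioi)] with r hr
    have : 0 ≤ r := by rcases hr with hr | hr <;> [exact hr.1.le; exact hR.trans hr.le]
    positivity

theorem lintegral_yukawa_angular {r R : ℝ} (hr : 0 < r) (hR : 0 < R) (hrR : r ≠ R) :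
    ∫⁻ θ in Ioo 0 π, ENNReal.ofReal (r ^ 2 * sin θ) *
        ENNReal.ofReal (exp (-r) / (r * √(r ^ 2 + R ^ 2 - 2 * R * (r * cos θ))))
      = ENNReal.ofReal (2 / R) * ENNReal.ofReal (exp (-r) * min r R) := by
  calc _ = ∫⁻ θ in Ioo 0 π, ENNReal.ofReal (r * exp (-r)) *
        ENNReal.ofReal (sin θ / √(r ^ 2 + R ^ 2 - 2 * R * r * cos θ)) := by
        refine setLIntegral_congr_fun measurableSet_Ioo fun θ hθ ↦ ?_
        have := sin_pos_of_pos_of_lt_pi hθ.1 hθ.2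
        rw [← ENNReal.ofReal_mul (by positivity), ← ENNReal.ofReal_mul (by positivity)]
        congr 1
        field_simp
    _ = ENNReal.ofReal (2 / R) * ENNReal.ofReal (exp (-r) * min r R) := by
        rw [lintegral_const_mul' _ _ ENNReal.ofReal_ne_top, lintegral_sin_div_sqrt hr hR hrR,
          ← ENNReal.ofReal_mul (by positivity), ← ENNReal.ofReal_mul (by positivity)]
        congr 1
        field_simp

theorem yukawa_conv_coulomb (x : EuclideanSpace ℝ (Fin 3)) (hx : x ≠ 0) :
    ∫ y : EuclideanSpace ℝ (Fin 3), Real.exp (-‖y‖) / (‖y‖ * ‖x - y‖)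
      = 4 * Real.pi / ‖x‖ * (1 - Real.exp (-‖x‖)) := by
  set R := ‖x‖
  have hR : 0 < R := norm_pos_iff.mpr hx
  have hu : ‖R⁻¹ • x‖ = 1 := norm_smul_inv_norm hx
  set F : ℝ → ℝ → ℝ≥0∞ := fun ρ z ↦
    ENNReal.ofReal (exp (-ρ) / (ρ * √(ρ ^ 2 + R ^ 2 - 2 * R * z)))
  have hkernel (y : EuclideanSpace ℝ (Fin 3)) :
      ENNReal.ofReal (exp (-‖y‖) / (‖y‖ * ‖x - y‖)) = F ‖y‖ (inner ℝ (R⁻¹ • x) y) := by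
    rw [norm_sub_eq_sqrt_inner_normalize]
  have hangular : ∀ᵐ r, r ∈ Ioi 0 →
      ∫⁻ θ in Ioo 0 π, ENNReal.ofReal (r ^ 2 * sin θ) * F r (r * cos θ)
        = ENNReal.ofReal (2 / R) * ENNReal.ofReal (exp (-r) * min r R) := by
    filter_upwards [Measure.ae_ne volume R] with r hrR hr
    exact lintegral_yukawa_angular hr hR hrR
  rw [integral_eq_lintegral_of_nonneg_ae (ae_of_all _ fun y ↦ by positivity)
    (by fun_prop : Measurable _).aestronglyMeasurable,
    lintegral_congr hkernel, lintegral_comp_norm_inner (by fun_prop) hu,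
    setLIntegral_congr_fun_ae measurableSet_Ioi hangular,
    lintegral_const_mul' _ _ ENNReal.ofReal_ne_top, lintegral_exp_neg_mul_min hR.le,
    ← ENNReal.ofReal_mul (by positivity), ← ENNReal.ofReal_mul (by positivity),
    ENNReal.toReal_ofReal]
  · field_simp
    ring
  · have := exp_le_one_iff.mpr (neg_nonpos.mpr hR.le)
    positivity
end

section
/- The Kato norm of the Yukawa potential equals $4\pi$: $\sup_{x \in \mathbb{R}^3} \int_{\mathbb{R}^3} \frac{e^{-|y|}}{|y|\,|x-y|}\, dy = 4\pi$. -/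
/-!
Both factors `e^{-|y|}/|y|` and `1/|x - y|` are radially nonincreasing about their centres, so
by the layer-cake formula the integral is `∫∫ |{f > s} ∩ (x + {g > t})| ds dt` with concentric
balls `{f > s}`, `{g > t}`. Translating one of two balls cannot enlarge their intersection
beyond the smaller one, which is their intersection when they are concentric; hence the
supremum is attained at `x = 0`, where polar coordinates give `4π ∫₀^∞ e^{-r} dr = 4π`.
-/

open MeasureTheory Set Real

local notation "ℝ³" => EuclideanSpace ℝ (Fin 3)

theorem lintegral_ofReal_mul_eq_lintegral_measure_inter {α : Type*} [MeasurableSpace α]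
    (μ : Measure α) {f g : α → ℝ} (hf_nn : 0 ≤ f) (hg_nn : 0 ≤ g)
    (hf : Measurable f) (hg : Measurable g) :
    ∫⁻ a, ENNReal.ofReal (f a) * ENNReal.ofReal (g a) ∂μ =
      ∫⁻ s in Ioi 0, ∫⁻ t in Ioi 0, μ ({a | s < f a} ∩ {a | t < g a}) := by
  set ν := μ.withDensity fun a => ENNReal.ofReal (g a)
  calc ∫⁻ a, ENNReal.ofReal (f a) * ENNReal.ofReal (g a) ∂μ
      = ∫⁻ a, ENNReal.ofReal (f a) ∂ν := by
        rw [lintegral_withDensity_eq_lintegral_mul _ hg.ennreal_ofReal hf.ennreal_ofReal]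
        simp only [Pi.mul_apply, mul_comm]
    _ = ∫⁻ s in Ioi 0, ν {a | s < f a} :=
        lintegral_eq_lintegral_meas_lt ν (ae_of_all _ hf_nn) hf.aemeasurable
    _ = ∫⁻ s in Ioi 0, ∫⁻ t in Ioi 0, μ ({a | s < f a} ∩ {a | t < g a}) := by
        refine lintegral_congr fun s => ?_
        have hs : MeasurableSet {a | s < f a} := measurableSet_lt measurable_const hf
        rw [withDensity_apply _ hs, lintegral_eq_lintegral_meas_lt _ (ae_of_all _ hg_nn)
          hg.aemeasurable]
        refine lintegral_congr fun t => ?_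
        rw [Measure.restrict_apply (measurableSet_lt measurable_const hg), inter_comm]

section Translation

variable {G : Type*} [AddGroup G] [MeasurableSpace G] [MeasurableAdd G] [MeasurableNeg G]
  (μ : Measure G) [μ.IsAddLeftInvariant] [μ.IsNegInvariant] {f g : G → ℝ}

theorem lintegral_ofReal_mul_comp_sub_le (hf_nn : 0 ≤ f) (hg_nn : 0 ≤ g) (hf : Measurable f)
    (hg : Measurable g) (h_nested : ∀ s > 0, ∀ t > 0,
      {y | s < f y} ⊆ {y | t < g y} ∨ {y | t < g y} ⊆ {y | s < f y}) (x : G) :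
    ∫⁻ y, ENNReal.ofReal (f y) * ENNReal.ofReal (g (x - y)) ∂μ ≤
      ∫⁻ y, ENNReal.ofReal (f y) * ENNReal.ofReal (g y) ∂μ := by
  rw [lintegral_ofReal_mul_eq_lintegral_measure_inter μ (g := fun y => g (x - y)) hf_nn
      (fun y => hg_nn (x - y)) hf (by fun_prop),
    lintegral_ofReal_mul_eq_lintegral_measure_inter μ hf_nn hg_nn hf hg]
  refine setLIntegral_mono' measurableSet_Ioi fun s hs => ?_
  refine setLIntegral_mono' measurableSet_Ioi fun t ht => ?_
  have h_translate : μ {y | t < g (x - y)} = μ {y | t < g y} := by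
    have : {y | t < g (x - y)} = Neg.neg ⁻¹' ((fun y => x + y) ⁻¹' {y | t < g y}) := by
      ext y; simp [sub_eq_add_neg]
    rw [this, Measure.measure_preimage_neg, measure_preimage_add]
  rcases h_nested s hs t ht with hfg | hgf
  · rw [inter_eq_self_of_subset_left hfg]
    exact measure_mono inter_subset_left
  · rw [inter_eq_self_of_subset_right hgf, ← h_translate]
    exact measure_mono inter_subset_right

theorem integral_mul_comp_sub_le (hf_nn : 0 ≤ f) (hg_nn : 0 ≤ g) (hf : Measurable f)
    (hg : Measurable g) (h_nested : ∀ s > 0, ∀ t > 0,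
      {y | s < f y} ⊆ {y | t < g y} ∨ {y | t < g y} ⊆ {y | s < f y})
    (hfg : Integrable (fun y => f y * g y) μ) (x : G) :
    ∫ y, f y * g (x - y) ∂μ ≤ ∫ y, f y * g y ∂μ := by
  have hfg_nn (u v : G) : 0 ≤ f u * g v := mul_nonneg (hf_nn u) (hg_nn v)
  rw [integral_eq_lintegral_of_nonneg_ae (ae_of_all _ fun y => hfg_nn y _) (by fun_prop)]
  refine ENNReal.toReal_le_of_le_ofReal (integral_nonneg fun y => hfg_nn y y) ?_
  rw [ofReal_integral_eq_lintegral_ofReal hfg (ae_of_all _ fun y => hfg_nn y y)]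
  simp only [ENNReal.ofReal_mul (hf_nn _)]
  exact lintegral_ofReal_mul_comp_sub_le μ hf_nn hg_nn hf hg h_nested x

end Translation

theorem setOf_lt_comp_norm_subset_or_subset {E : Type*} [SeminormedAddGroup E] {F G : ℝ → ℝ}
    (hF : AntitoneOn F (Ioi 0)) (hG : AntitoneOn G (Ioi 0)) {s t : ℝ} (hs : F 0 ≤ s)
    (ht : G 0 ≤ t) :
    {y : E | s < F ‖y‖} ⊆ {y | t < G ‖y‖} ∨ {y : E | t < G ‖y‖} ⊆ {y | s < F ‖y‖} := by
  refine or_iff_not_imp_left.mpr fun h => ?_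
  obtain ⟨a, ha, hab⟩ := not_subset.mp h
  simp only [mem_ofPred_eq, not_lt] at ha hab
  intro b (hb : t < G ‖b‖)
  have norm_pos {H : ℝ → ℝ} {u : ℝ} (hu : H 0 ≤ u) {y : E} (hy : u < H ‖y‖) : 0 < ‖y‖ :=
    (norm_nonneg y).lt_of_ne fun h => (h ▸ hu).not_gt hy
  have hba : ‖b‖ < ‖a‖ := by
    by_contra! hab'
    exact (hG (norm_pos hs ha) (norm_pos ht hb) hab').not_gt (hab.trans_lt hb)
  exact ha.trans_le (hF (norm_pos ht hb) (norm_pos hs ha) hba.le)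

theorem antitoneOn_exp_neg_div_self : AntitoneOn (fun r => exp (-r) / r) (Ioi 0) :=
  fun _ ha _ _ hab => div_le_div₀ (exp_pos _).le (exp_le_exp.2 (neg_le_neg hab)) ha hab

theorem integral_comp_norm_euclideanSpace_fin_three (F : ℝ → ℝ) :
    ∫ y : ℝ³, F ‖y‖ = 4 * π * ∫ r in Ioi 0, r ^ 2 * F r := by
  rw [integral_fun_norm_addHaar volume F]
  simp only [finrank_euclideanSpace, Fintype.card_fin, Measure.real,
    EuclideanSpace.volume_ball_fin_three, ENNReal.ofReal_one, one_pow, one_mul,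
    ENNReal.toReal_ofReal (by positivity : 0 ≤ π * 4 / 3), nsmul_eq_mul, smul_eq_mul]
  ring

theorem integral_exp_neg_norm_div_mul_inv_norm :
    ∫ y : ℝ³, exp (-‖y‖) / ‖y‖ * ‖y‖⁻¹ = 4 * π := by
  rw [integral_comp_norm_euclideanSpace_fin_three (fun r => exp (-r) / r * r⁻¹),
    setIntegral_congr_fun measurableSet_Ioi (g := fun r => exp (-r)) fun r (hr : 0 < r) => by
      field_simp, integral_exp_neg_Ioi_zero, mul_one]

theorem exp_neg_norm_div_mul_norm_sub (x y : ℝ³) :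
    exp (-‖y‖) / (‖y‖ * ‖x - y‖) = exp (-‖y‖) / ‖y‖ * ‖x - y‖⁻¹ := by
  rw [div_mul_eq_div_div, div_eq_mul_inv]

theorem integral_exp_neg_norm_div_mul_norm_sub_le (x : ℝ³) :
    ∫ y : ℝ³, exp (-‖y‖) / (‖y‖ * ‖x - y‖) ≤ 4 * π := by
  simp_rw [exp_neg_norm_div_mul_norm_sub, ← integral_exp_neg_norm_div_mul_inv_norm]
  refine integral_mul_comp_sub_le volume (f := fun y => exp (-‖y‖) / ‖y‖) (g := fun z => ‖z‖⁻¹)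
    (fun y => by positivity) (fun z => by positivity) (by fun_prop) (by fun_prop)
    (fun s hs t ht => ?_) ?_ x
  · exact setOf_lt_comp_norm_subset_or_subset antitoneOn_exp_neg_div_self inv_antitoneOn_Ioi
      (by simpa using hs.le) (by simpa using ht.le)
  · exact .of_integral_ne_zero (by rw [integral_exp_neg_norm_div_mul_inv_norm]; positivity)

theorem integral_exp_neg_norm_div_mul_norm_zero_sub :
    ∫ y : ℝ³, exp (-‖y‖) / (‖y‖ * ‖0 - y‖) = 4 * π := by
  simp_rw [exp_neg_norm_div_mul_norm_sub, zero_sub, norm_neg]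
  exact integral_exp_neg_norm_div_mul_inv_norm

theorem yukawa_kato_norm :
    (⨆ x : EuclideanSpace ℝ (Fin 3),
      ∫ y : EuclideanSpace ℝ (Fin 3), Real.exp (-‖y‖) / (‖y‖ * ‖x - y‖))
        = 4 * Real.pi := by
  refine le_antisymm (ciSup_le integral_exp_neg_norm_div_mul_norm_sub_le) ?_
  rw [← integral_exp_neg_norm_div_mul_norm_zero_sub]
  refine le_ciSup (f := fun x : ℝ³ => ∫ y : ℝ³, exp (-‖y‖) / (‖y‖ * ‖x - y‖))
    ⟨4 * π, ?_⟩ 0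
  rintro _ ⟨x, rfl⟩
  exact integral_exp_neg_norm_div_mul_norm_sub_le x
end

section
/- For every $\mu > 0$, the Kato norm of the scaled Yukawa potential satisfies $\sup_{x \in \mathbb{R}^3} \int_{\mathbb{R}^3} \frac{e^{-\mu |y|}}{|y|\,|x-y|}\, dy = \frac{4\pi}{\mu}$. -/
/-!
At `x = 0` the integral is computed in polar coordinates: `4π ∫₀^∞ e^{-μr} dr = 4π/μ`.
For general `x` it can only be smaller. Both factors `e^{-μ|y|}/|y|` and `1/|x - y|` are radially
decreasing, about `0` and about `x` respectively, so by the layer-cake formula the integral is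
`∫∫ |{F > t} ∩ {G_x > s}| ds dt`, and the superlevel sets are balls centred at `0` and at `x`.
Among balls of a given volume, the one concentric with the other ball meets it in the largest set.
-/

open MeasureTheory Real Set

section NormDownClosed

variable {E : Type*} [NormedAddCommGroup E]

/-- Up to the origin, these are the open or closed balls centred at `0` (of any radius in
`[0, ∞]`); the origin is left free because `f ‖0‖` is often a junk value such as `e⁰ / 0 = 0`. -/
def NormDownClosed (A : Set E) : Prop :=
  ∀ ⦃y z : E⦄, y ∈ A → 0 < ‖z‖ → ‖z‖ ≤ ‖y‖ → z ∈ A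

lemma normDownClosed_setOf_lt {f : ℝ → ℝ} (hf : AntitoneOn f (Ioi 0)) (t : ℝ) :
    NormDownClosed {y : E | t < f ‖y‖} := fun _ _ hy hz hzy =>
  hy.trans_le (hf hz (hz.trans_le hzy) hzy)

lemma NormDownClosed.subset_insert_or_subset_insert {A B : Set E} (hA : NormDownClosed A)
    (hB : NormDownClosed B) : A ⊆ insert 0 B ∨ B ⊆ insert 0 A := by
  by_contra! h
  obtain ⟨⟨a, haA, haB⟩, ⟨b, hbB, hbA⟩⟩ := And.imp not_subset.1 not_subset.1 h
  simp only [mem_insert_iff, not_or, ← norm_pos_iff] at haB hbA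
  rcases le_total ‖a‖ ‖b‖ with hab | hba
  · exact haB.2 (hB hbB haB.1 hab)
  · exact hbA.2 (hA haA hbA.1 hba)

variable [MeasurableSpace E] {ν : Measure E} [NullSingletonClass ν]

lemma NormDownClosed.measure_inter_le {A B : Set E} (hA : NormDownClosed A)
    (hB : NormDownClosed B) {C : Set E} (hC : ν C ≤ ν B) : ν (A ∩ C) ≤ ν (A ∩ B) := by
  have hnull : ν (insert 0 (A ∩ B)) = ν (A ∩ B) := measure_congr (insert_ae_eq_self _ _)
  rcases hA.subset_insert_or_subset_insert hB with hAB | hBA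
  · calc ν (A ∩ C) ≤ ν A := measure_mono inter_subset_left
      _ ≤ ν (insert 0 (A ∩ B)) := measure_mono fun y hy => by
        rcases hAB hy with rfl | hyB
        exacts [mem_insert _ _, mem_insert_of_mem _ ⟨hy, hyB⟩]
      _ = ν (A ∩ B) := hnull
  · calc ν (A ∩ C) ≤ ν C := measure_mono inter_subset_right
      _ ≤ ν B := hC
      _ ≤ ν (insert 0 (A ∩ B)) := measure_mono fun y hy => by
        rcases hBA hy with rfl | hyA
        exacts [mem_insert _ _, mem_insert_of_mem _ ⟨hyA, hy⟩]
      _ = ν (A ∩ B) := hnull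

end NormDownClosed

lemma lintegral_ofReal_mul_eq_lintegral_lintegral_measure_inter {α : Type*} [MeasurableSpace α]
    (ν : Measure α) {F G : α → ℝ} (hF : Measurable F) (hG : Measurable G) (hF₀ : 0 ≤ F)
    (hG₀ : 0 ≤ G) :
    ∫⁻ a, ENNReal.ofReal (F a * G a) ∂ν
      = ∫⁻ t in Ioi 0, ∫⁻ s in Ioi 0, ν ({a | t < F a} ∩ {a | s < G a}) := by
  have hFt (t : ℝ) : MeasurableSet {a | t < F a} := measurableSet_lt measurable_const hF
  calc ∫⁻ a, ENNReal.ofReal (F a * G a) ∂ν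
      = ∫⁻ a, ENNReal.ofReal (F a) ∂ν.withDensity fun a => ENNReal.ofReal (G a) := by
        rw [lintegral_withDensity_eq_lintegral_mul _ hG.ennreal_ofReal hF.ennreal_ofReal]
        simp_rw [Pi.mul_apply, mul_comm (ENNReal.ofReal (G _)), ENNReal.ofReal_mul (hF₀ _)]
    _ = ∫⁻ t in Ioi 0, ∫⁻ a in {a | t < F a}, ENNReal.ofReal (G a) ∂ν := by
        rw [lintegral_eq_lintegral_meas_lt _ (.of_forall hF₀) hF.aemeasurable]
        simp_rw [withDensity_apply _ (hFt _)]
    _ = _ := by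
        refine lintegral_congr fun t => ?_
        rw [lintegral_eq_lintegral_meas_lt _ (.of_forall hG₀) hG.aemeasurable]
        simp_rw [Measure.restrict_apply (measurableSet_lt measurable_const hG), inter_comm]

theorem lintegral_ofReal_mul_norm_sub_le {E : Type*} [NormedAddCommGroup E] [MeasurableSpace E]
    [BorelSpace E] (ν : Measure E) [ν.IsAddRightInvariant] [NullSingletonClass ν]
    {f g : ℝ → ℝ} (hfm : Measurable f) (hgm : Measurable g) (hf₀ : ∀ r, 0 ≤ r → 0 ≤ f r)
    (hg₀ : ∀ r, 0 ≤ r → 0 ≤ g r) (hf : AntitoneOn f (Ioi 0)) (hg : AntitoneOn g (Ioi 0))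
    (x : E) :
    ∫⁻ y, ENNReal.ofReal (f ‖y‖ * g ‖x - y‖) ∂ν ≤ ∫⁻ y, ENNReal.ofReal (f ‖y‖ * g ‖y‖) ∂ν := by
  have hF : Measurable fun y : E => f ‖y‖ := hfm.comp measurable_norm
  have hGx : Measurable fun y : E => g ‖x - y‖ :=
    hgm.comp (continuous_const.sub continuous_id).norm.measurable
  have hG : Measurable fun y : E => g ‖y‖ := hgm.comp measurable_norm
  have hF₀ : 0 ≤ fun y : E => f ‖y‖ := fun y => hf₀ _ (norm_nonneg _)
  rw [lintegral_ofReal_mul_eq_lintegral_lintegral_measure_inter ν hF hGx hF₀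
      fun y => hg₀ _ (norm_nonneg _),
    lintegral_ofReal_mul_eq_lintegral_lintegral_measure_inter ν hF hG hF₀
      fun y => hg₀ _ (norm_nonneg _)]
  refine lintegral_mono fun t => lintegral_mono fun s => ?_
  have htranslate : {y : E | s < g ‖x - y‖} = (· + -x) ⁻¹' {z : E | s < g ‖z‖} := by
    ext y; simp [← sub_eq_add_neg, norm_sub_rev]
  refine (normDownClosed_setOf_lt hf t).measure_inter_le (normDownClosed_setOf_lt hg s) ?_
  rw [htranslate, measure_preimage_add_right]

lemma sq_smul_exp_neg_mul_div_mul_self (μ : ℝ) {r : ℝ} (hr : r ≠ 0) :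
    r ^ 2 • (exp (-μ * r) / (r * r)) = exp (-μ * r) := by
  rw [smul_eq_mul]; field_simp

lemma antitoneOn_exp_neg_mul_div_self {μ : ℝ} (hμ : 0 ≤ μ) :
    AntitoneOn (fun r => exp (-μ * r) / r) (Ioi 0) := fun r hr _ _ hrs =>
  div_le_div₀ (exp_pos _).le (exp_le_exp.2 (mul_le_mul_of_nonpos_left hrs (by linarith))) hr hrs

lemma integrable_exp_neg_mul_norm_div_norm_mul_norm {μ : ℝ} (hμ : 0 < μ) :
    Integrable fun y : EuclideanSpace ℝ (Fin 3) => exp (-μ * ‖y‖) / (‖y‖ * ‖y‖) := by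
  rw [integrable_fun_norm_addHaar volume (f := fun r => exp (-μ * r) / (r * r)),
    finrank_euclideanSpace_fin]
  exact (exp_neg_integrableOn_Ioi 0 hμ).congr_fun
    (fun r hr => (sq_smul_exp_neg_mul_div_mul_self μ (ne_of_gt hr)).symm) measurableSet_Ioi

lemma integral_exp_neg_mul_norm_div_norm_mul_norm {μ : ℝ} (hμ : 0 < μ) :
    ∫ y : EuclideanSpace ℝ (Fin 3), exp (-μ * ‖y‖) / (‖y‖ * ‖y‖) = 4 * π / μ := by
  rw [integral_fun_norm_addHaar volume (fun r => exp (-μ * r) / (r * r)),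
    finrank_euclideanSpace_fin]
  simp only [Nat.reduceSub]
  rw [setIntegral_congr_fun measurableSet_Ioi fun r hr =>
      sq_smul_exp_neg_mul_div_mul_self μ (ne_of_gt hr),
    integral_exp_mul_Ioi (neg_neg_of_pos hμ), Measure.real, EuclideanSpace.volume_ball_fin_three]
  simp [ENNReal.toReal_ofReal (by positivity : 0 ≤ π * 4 / 3)]
  field_simp

theorem scaled_yukawa_kato_norm (μ : ℝ) (hμ : 0 < μ) :
    (⨆ x : EuclideanSpace ℝ (Fin 3),
      ∫ y : EuclideanSpace ℝ (Fin 3), Real.exp (-μ * ‖y‖) / (‖y‖ * ‖x - y‖))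
        = 4 * Real.pi / μ := by
  set I := fun x : EuclideanSpace ℝ (Fin 3) =>
    ∫ y : EuclideanSpace ℝ (Fin 3), exp (-μ * ‖y‖) / (‖y‖ * ‖x - y‖)
  have hI (x) : I x = (∫⁻ y, ENNReal.ofReal (exp (-μ * ‖y‖) / ‖y‖ * ‖x - y‖⁻¹)).toReal := by
    simp_rw [I, div_mul_eq_div_div, div_eq_mul_inv]
    exact integral_eq_lintegral_of_nonneg_ae (.of_forall fun y => by positivity)
      (by fun_prop : Measurable _).aestronglyMeasurable
  have hcentre : ∫⁻ y : EuclideanSpace ℝ (Fin 3),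
      ENNReal.ofReal (exp (-μ * ‖y‖) / ‖y‖ * ‖y‖⁻¹) = ENNReal.ofReal (4 * π / μ) := by
    simp_rw [← div_eq_mul_inv, div_div]
    rw [← ofReal_integral_eq_lintegral_ofReal (integrable_exp_neg_mul_norm_div_norm_mul_norm hμ)
      (.of_forall fun y => by positivity), integral_exp_neg_mul_norm_div_norm_mul_norm hμ]
  have hle (x) : I x ≤ 4 * π / μ := by
    rw [hI, ← ENNReal.toReal_ofReal (by positivity : 0 ≤ 4 * π / μ), ← hcentre]
    refine ENNReal.toReal_mono (hcentre ▸ ENNReal.ofReal_ne_top) ?_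
    exact lintegral_ofReal_mul_norm_sub_le volume (by fun_prop) measurable_inv
      (fun r hr => by positivity) (fun r hr => inv_nonneg.2 hr)
      (antitoneOn_exp_neg_mul_div_self hμ.le) (fun _ hr _ _ hrs => inv_anti₀ hr hrs) x
  have hzero : I 0 = 4 * π / μ := by
    rw [hI]
    simp only [zero_sub, norm_neg, hcentre]
    exact ENNReal.toReal_ofReal (by positivity)
  exact le_antisymm (ciSup_le hle) (hzero ▸ le_ciSup ⟨_, forall_mem_range.2 hle⟩ 0)
end

section
/- Let $Q \in \mathbb{R}$ and $\mu > 0$, and let $V(x) = Q\, \frac{e^{-\mu |x|}}{|x|}$ on $\mathbb{R}^3$. Then $\max\{\|V\|_R, \|V\|_{\mathcal{K}}\} < 4\pi$ if and only if $|Q| < \mu$. -/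
/-!
The Kato norm of `V` is attained at `x = 0`: splitting `ℝ³` along the perpendicular bisector of
`0` and `x` and reflecting one half onto the other, the rearrangement inequality shows that
`∫ f(|y|) g(|x - y|) dy ≤ ∫ f(|y|) g(|y|) dy` for decreasing `f, g ≥ 0`. In polar coordinates
`∫ e^{-μ|y|} / |y|² dy = 4π/μ`, so `‖V‖_𝒦 = 4π|Q|/μ`. For the Rollnik norm, AM-GM gives
`1/(|x||y|) ≤ (1/|x|² + 1/|y|²)/2`; by symmetry and the same rearrangement bound for the kernel
`e^{-μ|y|} / |x - y|²`, this yields `‖V‖_R ≤ 4π|Q|/μ`, so the maximum is the Kato norm.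
-/

open MeasureTheory Real

/-- The Rollnik norm of a potential `V` on `ℝ³`. -/
noncomputable def rollnikNorm (V : EuclideanSpace ℝ (Fin 3) → ℂ) : ℝ :=
  Real.sqrt (∫ p : EuclideanSpace ℝ (Fin 3) × EuclideanSpace ℝ (Fin 3),
    ‖V p.1 * V p.2‖ / ‖p.1 - p.2‖ ^ 2)

/-- The Kato norm of a potential `V` on `ℝ³`. -/
noncomputable def katoNorm (V : EuclideanSpace ℝ (Fin 3) → ℂ) : ℝ :=
  ⨆ x : EuclideanSpace ℝ (Fin 3),
    ∫ y : EuclideanSpace ℝ (Fin 3), ‖V y‖ / ‖x - y‖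

open Set Metric
open scoped ENNReal

local notation "ℝ³" => EuclideanSpace ℝ (Fin 3)

theorem ENNReal.mul_add_mul_le_mul_add_mul {a b c d : ℝ≥0∞} (hab : a ≤ b) (hcd : c ≤ d) :
    a * d + b * c ≤ a * c + b * d := by
  obtain ⟨e, rfl⟩ := exists_add_of_le hcd
  calc a * (c + e) + b * c = a * c + b * c + a * e := by ring
    _ ≤ a * c + b * c + b * e := by gcongr
    _ = a * c + b * (c + e) := by ring

theorem ENNReal.two_mul_le_add_sq (a b : ℝ≥0∞) : 2 * a * b ≤ a ^ 2 + b ^ 2 := by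
  rcases le_total a b with h | h
  · simpa [two_mul, add_mul, sq, mul_comm b a] using ENNReal.mul_add_mul_le_mul_add_mul h h
  · simpa [two_mul, add_mul, sq, mul_comm b a, add_comm] using
      ENNReal.mul_add_mul_le_mul_add_mul h h

theorem lintegral_fun_norm_addHaar {E : Type*} [NormedAddCommGroup E] [NormedSpace ℝ E]
    [Nontrivial E] [FiniteDimensional ℝ E] [MeasurableSpace E] [BorelSpace E] (μ : Measure E)
    [μ.IsAddHaarMeasure] {f : ℝ → ℝ≥0∞} (hf : Measurable f) :
    ∫⁻ x, f ‖x‖ ∂μ = Module.finrank ℝ E * μ (ball 0 1) *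
      ∫⁻ r in Ioi 0, ENNReal.ofReal (r ^ (Module.finrank ℝ E - 1)) * f r := by
  have hmeas : Measurable fun p : sphere (0 : E) 1 × Ioi (0 : ℝ) => f p.2 :=
    hf.comp (measurable_subtype_coe.comp measurable_snd)
  calc ∫⁻ x, f ‖x‖ ∂μ = ∫⁻ x : ({0}ᶜ : Set E), f ‖x.1‖ ∂(μ.comap Subtype.val) := by
        rw [lintegral_subtype_comap (measurableSet_singleton _).compl (fun x => f ‖x‖),
          restrict_compl_singleton]
    _ = ∫⁻ p, f p.2 ∂(μ.toSphere.prod (Measure.volumeIoiPow (Module.finrank ℝ E - 1))) := by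
        simpa using (μ.measurePreserving_homeomorphUnitSphereProd).lintegral_comp hmeas
    _ = μ.toSphere univ * ∫⁻ r, f r ∂(Measure.volumeIoiPow (Module.finrank ℝ E - 1)) := by
        rw [lintegral_prod _ hmeas.aemeasurable]
        simp [lintegral_const, mul_comm]
    _ = _ := by
        rw [μ.toSphere_apply_univ, Measure.volumeIoiPow,
          lintegral_withDensity_eq_lintegral_mul _ (by fun_prop)
            (g := fun r : Ioi (0 : ℝ) => f r) (hf.comp measurable_subtype_coe),
          ← lintegral_subtype_comap measurableSet_Ioi (fun r => ENNReal.ofReal (r ^ _) * f r)]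
        rfl

section Reflection

variable {E : Type*} [NormedAddCommGroup E] [InnerProductSpace ℝ E] [FiniteDimensional ℝ E]
  [MeasurableSpace E] [BorelSpace E] (μ : Measure E) [μ.IsAddHaarMeasure]

/-- The reflection `y ↦ x - y` exchanges the two open half-spaces bounded by the perpendicular
bisector of `0` and `x`, and the bisector itself is null. -/
theorem lintegral_eq_setLIntegral_add_comp_sub_left {x : E} (hx : x ≠ 0) {H : E → ℝ≥0∞}
    (hH : Measurable H) :
    ∫⁻ y, H y ∂μ = ∫⁻ y in {y | ‖x - y‖ < ‖y‖}, H y + H (x - y) ∂μ := by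
  set S := {y : E | ‖x - y‖ < ‖y‖}
  have hS : MeasurableSet S := measurableSet_lt (by fun_prop) (by fun_prop)
  have hbisector : μ (AffineSubspace.perpBisector 0 x) = 0 :=
    Measure.addHaar_affineSubspace μ _ (by simpa using hx.symm)
  have hcompl : (Sᶜ : Set E) =ᵐ[μ] (x - ·) ⁻¹' S := by
    filter_upwards [measure_eq_zero_iff_ae_notMem.1 hbisector] with y hy
    rw [SetLike.mem_coe, AffineSubspace.mem_perpBisector_iff_dist_eq, dist_zero_right,
      dist_eq_norm, norm_sub_rev] at hy
    change (y ∈ Sᶜ) = (y ∈ (x - ·) ⁻¹' S)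
    simp only [S, mem_compl_iff, mem_preimage, mem_ofPred_eq, sub_sub_cancel, not_lt, eq_iff_iff]
    exact ⟨fun h => h.lt_of_ne hy, le_of_lt⟩
  calc ∫⁻ y, H y ∂μ = ∫⁻ y in S, H y ∂μ + ∫⁻ y in (x - ·) ⁻¹' S, H y ∂μ := by
        rw [← lintegral_add_compl H hS, setLIntegral_congr hcompl]
    _ = ∫⁻ y in S, H y ∂μ + ∫⁻ y in S, H (x - y) ∂μ := by
        congr 1
        simpa using (Measure.measurePreserving_sub_left μ x).setLIntegral_comp_preimage hS
          (hH.comp (measurable_const.sub measurable_id) (f := fun y => x - y))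
    _ = ∫⁻ y in S, H y + H (x - y) ∂μ := (lintegral_add_left hH _).symm

theorem lintegral_mul_norm_sub_le_of_antitone {f g : ℝ → ℝ≥0∞} (hf : Antitone f)
    (hg : Antitone g) (hfm : Measurable f) (hgm : Measurable g) (x : E) :
    ∫⁻ y, f ‖y‖ * g ‖x - y‖ ∂μ ≤ ∫⁻ y, f ‖y‖ * g ‖y‖ ∂μ := by
  rcases eq_or_ne x 0 with rfl | hx
  · simp
  rw [lintegral_eq_setLIntegral_add_comp_sub_left μ hx (by fun_prop),
    lintegral_eq_setLIntegral_add_comp_sub_left μ hx (by fun_prop)]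
  refine setLIntegral_mono (by fun_prop) fun y (hy : ‖x - y‖ < ‖y‖) => ?_
  simpa [sub_sub_cancel, add_comm, mul_comm] using
    ENNReal.mul_add_mul_le_mul_add_mul (hf hy.le) (hg hy.le)

end Reflection

/-- A Schur test: `a x a y ≤ (a x ^ 2 + a y ^ 2) / 2` and the symmetry of `K` reduce the double
integral to an iterated one whose inner integral is bounded by `C`. -/
theorem lintegral_prod_mul_kernel_le {α : Type*} [MeasurableSpace α] {μ : Measure α} [SFinite μ]
    {w a : α → ℝ≥0∞} {K : α → α → ℝ≥0∞} (hw : Measurable w) (ha : Measurable a)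
    (hK : Measurable (Function.uncurry K)) (hK_symm : ∀ x y, K x y = K y x) {C : ℝ≥0∞}
    (hC : ∀ x, ∫⁻ y, w y * K x y ∂μ ≤ C) :
    ∫⁻ p, w p.1 * a p.1 * (w p.2 * a p.2) * K p.1 p.2 ∂μ.prod μ ≤
      (∫⁻ x, w x * a x ^ 2 ∂μ) * C := by
  set H : α × α → ℝ≥0∞ := fun p => w p.1 * a p.1 ^ 2 * (w p.2 * K p.1 p.2)
  have hH : Measurable H := by fun_prop
  have hswap : ∫⁻ p, H p.swap ∂μ.prod μ = ∫⁻ p, H p ∂μ.prod μ :=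
    Measure.measurePreserving_swap.lintegral_comp hH
  have hH_le : ∫⁻ p, H p ∂μ.prod μ ≤ (∫⁻ x, w x * a x ^ 2 ∂μ) * C := calc
    ∫⁻ p, H p ∂μ.prod μ = ∫⁻ x, w x * a x ^ 2 * ∫⁻ y, w y * K x y ∂μ ∂μ := by
      rw [lintegral_prod _ hH.aemeasurable]
      exact lintegral_congr fun x =>
        lintegral_const_mul (w x * a x ^ 2) (hw.mul (hK.comp measurable_prodMk_left))
    _ ≤ ∫⁻ x, w x * a x ^ 2 * C ∂μ := by gcongr with x; exact hC x
    _ = (∫⁻ x, w x * a x ^ 2 ∂μ) * C := lintegral_mul_const _ (by fun_prop)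
  refine (ENNReal.mul_le_mul_iff_right two_ne_zero ENNReal.ofNat_ne_top).1 ?_
  calc 2 * ∫⁻ p, w p.1 * a p.1 * (w p.2 * a p.2) * K p.1 p.2 ∂μ.prod μ
      ≤ ∫⁻ p, H p + H p.swap ∂μ.prod μ := by
        rw [← lintegral_const_mul _ (by fun_prop)]
        refine lintegral_mono fun p => ?_
        calc 2 * (w p.1 * a p.1 * (w p.2 * a p.2) * K p.1 p.2)
            = w p.1 * w p.2 * K p.1 p.2 * (2 * a p.1 * a p.2) := by ring
          _ ≤ w p.1 * w p.2 * K p.1 p.2 * (a p.1 ^ 2 + a p.2 ^ 2) := by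
            gcongr; exact ENNReal.two_mul_le_add_sq _ _
          _ = H p + H p.swap := by simp only [H, Prod.fst_swap, Prod.snd_swap, hK_symm p.2]; ring
    _ = 2 * ∫⁻ p, H p ∂μ.prod μ := by rw [lintegral_add_left hH, hswap, two_mul]
    _ ≤ 2 * ((∫⁻ x, w x * a x ^ 2 ∂μ) * C) := by gcongr

theorem lintegral_exp_neg_mul_Ioi {m : ℝ} (hm : 0 < m) :
    ∫⁻ r in Ioi 0, ENNReal.ofReal (exp (-m * r)) = ENNReal.ofReal m⁻¹ := by
  rw [← ofReal_integral_eq_lintegral_ofReal (exp_neg_integrableOn_Ioi 0 hm)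
    (.of_forall fun _ => (exp_pos _).le), integral_exp_mul_Ioi (neg_lt_zero.2 hm)]
  simp

theorem antitone_ofReal_exp_neg_mul {m : ℝ} (hm : 0 ≤ m) :
    Antitone fun t => ENNReal.ofReal (exp (-m * t)) :=
  fun _ _ h => ENNReal.ofReal_le_ofReal (exp_le_exp.2 (by nlinarith))

theorem antitone_inv_ofReal : Antitone fun t : ℝ => (ENNReal.ofReal t)⁻¹ :=
  fun _ _ h => ENNReal.inv_le_inv.2 (ENNReal.ofReal_le_ofReal h)

section Yukawa

variable {m : ℝ} (hm : 0 < m)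
include hm

theorem lintegral_exp_neg_mul_norm_mul_inv_sq :
    ∫⁻ y : ℝ³, ENNReal.ofReal (exp (-m * ‖y‖)) * (ENNReal.ofReal ‖y‖)⁻¹ ^ 2 =
      ENNReal.ofReal (4 * π / m) := by
  have hradial : ∀ r ∈ Ioi (0 : ℝ), ENNReal.ofReal (r ^ (3 - 1)) *
      (ENNReal.ofReal (exp (-m * r)) * (ENNReal.ofReal r)⁻¹ ^ 2) =
        ENNReal.ofReal (exp (-m * r)) := by
    intro r (hr : 0 < r)
    rw [ENNReal.ofReal_pow hr.le, mul_left_comm, ← mul_pow,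
      ENNReal.mul_inv_cancel (by simpa using hr) ENNReal.ofReal_ne_top, one_pow, mul_one]
  rw [lintegral_fun_norm_addHaar volume
      (f := fun t => ENNReal.ofReal (exp (-m * t)) * (ENNReal.ofReal t)⁻¹ ^ 2) (by fun_prop),
    finrank_euclideanSpace_fin, EuclideanSpace.volume_ball_fin_three,
    setLIntegral_congr_fun measurableSet_Ioi hradial, lintegral_exp_neg_mul_Ioi hm,
    ENNReal.ofReal_one, one_pow, one_mul, ← ENNReal.ofReal_natCast,
    ← ENNReal.ofReal_mul (by positivity), ← ENNReal.ofReal_mul (by positivity)]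
  congr 1
  field_simp
  norm_num

theorem lintegral_yukawa_mul_inv_norm_sub_le (x : ℝ³) :
    ∫⁻ y : ℝ³, ENNReal.ofReal (exp (-m * ‖y‖)) * (ENNReal.ofReal ‖y‖)⁻¹ *
      (ENNReal.ofReal ‖x - y‖)⁻¹ ≤ ENNReal.ofReal (4 * π / m) := by
  refine (lintegral_mul_norm_sub_le_of_antitone volume
    ((antitone_ofReal_exp_neg_mul hm.le).mul' antitone_inv_ofReal) antitone_inv_ofReal
    (by fun_prop) (by fun_prop) x).trans_eq ?_
  simpa [sq, mul_assoc] using lintegral_exp_neg_mul_norm_mul_inv_sq hm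

theorem lintegral_yukawa_mul_yukawa_mul_inv_norm_sub_sq_le :
    ∫⁻ p : ℝ³ × ℝ³, ENNReal.ofReal (exp (-m * ‖p.1‖)) * (ENNReal.ofReal ‖p.1‖)⁻¹ *
      (ENNReal.ofReal (exp (-m * ‖p.2‖)) * (ENNReal.ofReal ‖p.2‖)⁻¹) *
      (ENNReal.ofReal ‖p.1 - p.2‖)⁻¹ ^ 2 ≤ ENNReal.ofReal (4 * π / m) ^ 2 := by
  rw [Measure.volume_eq_prod, sq (ENNReal.ofReal _), ← lintegral_exp_neg_mul_norm_mul_inv_sq hm]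
  refine lintegral_prod_mul_kernel_le (w := fun y : ℝ³ => ENNReal.ofReal (exp (-m * ‖y‖)))
    (a := fun y => (ENNReal.ofReal ‖y‖)⁻¹) (K := fun x y => (ENNReal.ofReal ‖x - y‖)⁻¹ ^ 2)
    (by fun_prop) (by fun_prop) (by fun_prop)
    (fun x y => by rw [norm_sub_rev]) fun x => ?_
  rw [lintegral_exp_neg_mul_norm_mul_inv_sq hm]
  exact lintegral_mul_norm_sub_le_of_antitone volume (antitone_ofReal_exp_neg_mul hm.le)
    (fun _ _ h => pow_le_pow_left' (antitone_inv_ofReal h) 2) (by fun_prop) (by fun_prop) x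
    |>.trans_eq (lintegral_exp_neg_mul_norm_mul_inv_sq hm)

end Yukawa

section YukawaPotential

variable {Q μ : ℝ} {V : ℝ³ → ℂ} (hV : ∀ x, V x = (Q : ℂ) * Real.exp (-μ * ‖x‖) / (‖x‖ : ℂ))
include hV

theorem norm_eq_of_yukawa (y : ℝ³) : ‖V y‖ = |Q| * exp (-μ * ‖y‖) / ‖y‖ := by
  simp only [hV y, norm_div, norm_mul, Complex.norm_real, Real.norm_eq_abs, abs_exp, abs_norm]

theorem integral_norm_div_norm_sub_of_yukawa (x : ℝ³) :
    ∫ y, ‖V y‖ / ‖x - y‖ = (ENNReal.ofReal |Q| * ∫⁻ y, ENNReal.ofReal (exp (-μ * ‖y‖)) *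
      (ENNReal.ofReal ‖y‖)⁻¹ * (ENNReal.ofReal ‖x - y‖)⁻¹).toReal := by
  have hVm : Measurable V := by
    rw [funext hV]
    fun_prop
  rw [integral_eq_lintegral_of_nonneg_ae (.of_forall fun y => by positivity)
      (by fun_prop : Measurable fun y => ‖V y‖ / ‖x - y‖).aestronglyMeasurable,
    ← lintegral_const_mul _ (by fun_prop)]
  congr 1
  refine lintegral_congr_ae ?_
  filter_upwards [volume.ae_ne 0, volume.ae_ne x] with y hy0 hyx
  rw [norm_eq_of_yukawa hV, ENNReal.ofReal_div_of_pos (norm_pos_iff.2 (sub_ne_zero.2 hyx.symm)),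
    ENNReal.ofReal_div_of_pos (norm_pos_iff.2 hy0), ENNReal.ofReal_mul (abs_nonneg Q)]
  simp only [div_eq_mul_inv, mul_assoc]

theorem ofReal_norm_le_of_yukawa (y : ℝ³) :
    ENNReal.ofReal ‖V y‖ ≤
      ENNReal.ofReal |Q| * (ENNReal.ofReal (exp (-μ * ‖y‖)) * (ENNReal.ofReal ‖y‖)⁻¹) := by
  rw [norm_eq_of_yukawa hV, ← mul_assoc, ← ENNReal.ofReal_mul (abs_nonneg Q), ← div_eq_mul_inv]
  exact ENNReal.ofReal_div_le (norm_nonneg y)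

theorem katoNorm_eq_of_yukawa (hμ : 0 < μ) : katoNorm V = |Q| * (4 * π / μ) := by
  have hbound : ∀ x, ∫ y, ‖V y‖ / ‖x - y‖ ≤ |Q| * (4 * π / μ) := fun x => by
    rw [integral_norm_div_norm_sub_of_yukawa hV, ← ENNReal.toReal_ofReal (by positivity :
      0 ≤ |Q| * (4 * π / μ)), ENNReal.ofReal_mul (abs_nonneg Q)]
    exact ENNReal.toReal_mono (by finiteness)
      (by gcongr; exact lintegral_yukawa_mul_inv_norm_sub_le hμ x)
  have hzero : ∫ y, ‖V y‖ / ‖(0 : ℝ³) - y‖ = |Q| * (4 * π / μ) := by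
    rw [integral_norm_div_norm_sub_of_yukawa hV]
    simp only [zero_sub, norm_neg, mul_assoc, ← sq]
    rw [lintegral_exp_neg_mul_norm_mul_inv_sq hμ, ← ENNReal.ofReal_mul (abs_nonneg Q),
      ENNReal.toReal_ofReal (by positivity)]
  exact le_antisymm (ciSup_le hbound)
    (hzero ▸ le_ciSup ⟨_, forall_mem_range.2 hbound⟩ (0 : ℝ³))

theorem lintegral_ofReal_rollnik_le_of_yukawa (hμ : 0 < μ) :
    ∫⁻ p : ℝ³ × ℝ³, ENNReal.ofReal (‖V p.1 * V p.2‖ / ‖p.1 - p.2‖ ^ 2) ≤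
      ENNReal.ofReal (|Q| * (4 * π / μ)) ^ 2 := calc
  _ ≤ ∫⁻ p : ℝ³ × ℝ³, ENNReal.ofReal |Q| ^ 2 *
      (ENNReal.ofReal (exp (-μ * ‖p.1‖)) * (ENNReal.ofReal ‖p.1‖)⁻¹ *
        (ENNReal.ofReal (exp (-μ * ‖p.2‖)) * (ENNReal.ofReal ‖p.2‖)⁻¹) *
        (ENNReal.ofReal ‖p.1 - p.2‖)⁻¹ ^ 2) := by
    refine lintegral_mono fun p => (ENNReal.ofReal_div_le (by positivity)).trans ?_
    rw [norm_mul, ENNReal.ofReal_mul (norm_nonneg _), ENNReal.ofReal_pow (norm_nonneg _),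
      div_eq_mul_inv, ← ENNReal.inv_pow]
    grw [ofReal_norm_le_of_yukawa hV p.1, ofReal_norm_le_of_yukawa hV p.2]
    exact le_of_eq (by ring)
  _ = ENNReal.ofReal |Q| ^ 2 * ∫⁻ p : ℝ³ × ℝ³,
      ENNReal.ofReal (exp (-μ * ‖p.1‖)) * (ENNReal.ofReal ‖p.1‖)⁻¹ *
        (ENNReal.ofReal (exp (-μ * ‖p.2‖)) * (ENNReal.ofReal ‖p.2‖)⁻¹) *
        (ENNReal.ofReal ‖p.1 - p.2‖)⁻¹ ^ 2 := lintegral_const_mul _ (by fun_prop)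
  _ ≤ ENNReal.ofReal |Q| ^ 2 * ENNReal.ofReal (4 * π / μ) ^ 2 := by
    gcongr
    exact lintegral_yukawa_mul_yukawa_mul_inv_norm_sub_sq_le hμ
  _ = ENNReal.ofReal (|Q| * (4 * π / μ)) ^ 2 := by
    rw [← mul_pow, ← ENNReal.ofReal_mul (abs_nonneg Q)]

theorem rollnikNorm_le_of_yukawa (hμ : 0 < μ) : rollnikNorm V ≤ |Q| * (4 * π / μ) := by
  have hintegral : ∫ p : ℝ³ × ℝ³, ‖V p.1 * V p.2‖ / ‖p.1 - p.2‖ ^ 2 ≤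
      (|Q| * (4 * π / μ)) ^ 2 := calc
    _ ≤ (∫⁻ p : ℝ³ × ℝ³, ENNReal.ofReal ‖‖V p.1 * V p.2‖ / ‖p.1 - p.2‖ ^ 2‖).toReal :=
      (Real.le_norm_self _).trans (norm_integral_le_lintegral_norm _)
    _ ≤ (ENNReal.ofReal (|Q| * (4 * π / μ)) ^ 2).toReal := by
      refine ENNReal.toReal_mono (by finiteness) ?_
      simpa only [Real.norm_eq_abs, abs_div, abs_pow, abs_norm] using
        lintegral_ofReal_rollnik_le_of_yukawa hV hμ
    _ = (|Q| * (4 * π / μ)) ^ 2 := by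
      rw [← ENNReal.ofReal_pow (by positivity), ENNReal.toReal_ofReal (by positivity)]
  calc rollnikNorm V ≤ √((|Q| * (4 * π / μ)) ^ 2) := Real.sqrt_le_sqrt hintegral
    _ = |Q| * (4 * π / μ) := Real.sqrt_sq (by positivity)

end YukawaPotential

theorem yukawa_smallness_iff (Q μ : ℝ) (hμ : 0 < μ)
    (V : EuclideanSpace ℝ (Fin 3) → ℂ)
    (hV : ∀ x, V x = (Q : ℂ) * Real.exp (-μ * ‖x‖) / (‖x‖ : ℂ)) :
    max (rollnikNorm V) (katoNorm V) < 4 * Real.pi ↔ |Q| < μ := by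
  have hkato := katoNorm_eq_of_yukawa hV hμ
  rw [max_eq_right ((rollnikNorm_le_of_yukawa hV hμ).trans hkato.ge), hkato, ← mul_div_assoc,
    div_lt_iff₀ hμ, mul_comm |Q|]
  exact mul_lt_mul_iff_right₀ (by positivity)
end

section
/- Let $h \in L^1(\mathbb{R}^3)$ with $h \ge 0$ almost everywhere and $\int_{\mathbb{R}^3} h > 0$. Define $F : \mathbb{R} \to \mathbb{R}$ by $F(\alpha) = \int_{\mathbb{R}^3} \frac{\alpha\, h(\xi)}{|\alpha| + |\xi|^2}\, d\xi$ for $\alpha \ne 0$ and $F(0) = 0$. Then $F$ is odd, continuous on $\mathbb{R}$, and strictly monotonically increasing. -/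
open MeasureTheory Real

theorem yukawa_form_strict_mono (h : EuclideanSpace ℝ (Fin 3) → ℝ)
    (hint : Integrable h) (hpos : ∀ᵐ ξ, 0 ≤ h ξ)
    (hne : 0 < ∫ ξ, h ξ)
    (F : ℝ → ℝ)
    (hF : ∀ α : ℝ, F α = ∫ ξ : EuclideanSpace ℝ (Fin 3), α * h ξ / (|α| + ‖ξ‖ ^ 2)) :
    (∀ α : ℝ, F (-α) = -F α) ∧ Continuous F ∧ StrictMono F := by
  have hne0 : ∀ᵐ ξ : EuclideanSpace ℝ (Fin 3), ξ ≠ 0 := by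
    rw [MeasureTheory.ae_iff]
    simpa using measure_singleton (0 : EuclideanSpace ℝ (Fin 3))
  -- bound
  have hbd : ∀ (x : ℝ) (ξ : EuclideanSpace ℝ (Fin 3)),
      |x * h ξ / (|x| + ‖ξ‖ ^ 2)| ≤ |h ξ| := by
    intro x ξ
    have ht : (0:ℝ) ≤ ‖ξ‖ ^ 2 := sq_nonneg _
    have hd : (0:ℝ) ≤ |x| + ‖ξ‖ ^ 2 := by positivity
    rcases hd.eq_or_lt with hd0 | hd0
    · have hx : |x| = 0 := by nlinarith [abs_nonneg x]
      have : x = 0 := abs_eq_zero.mp hx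
      simp [this, abs_nonneg]
    · rw [abs_div, abs_mul, abs_of_pos hd0, div_le_iff₀ hd0]
      nlinarith [abs_nonneg x, abs_nonneg (h ξ)]
  -- integrability
  have hintf : ∀ x : ℝ, Integrable
      (fun ξ : EuclideanSpace ℝ (Fin 3) => x * h ξ / (|x| + ‖ξ‖ ^ 2)) := by
    intro x
    refine hint.mono ?_ (Filter.Eventually.of_forall fun ξ => ?_)
    · exact ((hint.aemeasurable.const_mul x).div
        ((continuous_const.add ((continuous_norm).pow 2)).measurable.aemeasurable)).aestronglyMeasurable
    · rw [Real.norm_eq_abs, Real.norm_eq_abs]; exact hbd x ξ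
  -- oddness
  have hodd : ∀ α : ℝ, F (-α) = -F α := by
    intro α
    rw [hF, hF, ← integral_neg]
    congr 1; funext ξ; rw [abs_neg]; ring
  -- strict monotonicity core: 0 ≤ a < b → F a < F b
  have hcore : ∀ a b : ℝ, 0 ≤ a → a < b → F a < F b := by
    intro a b ha hab
    have hb : 0 < b := lt_of_le_of_lt ha hab
    have hab' : |a| = a := abs_of_nonneg ha
    have hbb' : |b| = b := abs_of_pos hb
    set G : EuclideanSpace ℝ (Fin 3) → ℝ :=
      fun ξ => b * h ξ / (|b| + ‖ξ‖ ^ 2) - a * h ξ / (|a| + ‖ξ‖ ^ 2) with hG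
    have hGint : Integrable G := (hintf b).sub (hintf a)
    have hGnn : 0 ≤ᵐ[volume] G := by
      filter_upwards [hpos, hne0] with ξ hp hξ
      have ht : (0:ℝ) < ‖ξ‖ ^ 2 := pow_pos (norm_pos_iff.mpr hξ) 2
      have e1 : a * h ξ / (a + ‖ξ‖ ^ 2) ≤ b * h ξ / (b + ‖ξ‖ ^ 2) := by
        rw [div_le_div_iff₀ (by linarith) (by linarith)]
        nlinarith [mul_nonneg (mul_nonneg hp ht.le) (sub_nonneg.mpr hab.le)]
      simp only [Pi.zero_apply, hG, hab', hbb']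
      linarith
    have key : 0 < ∫ ξ, G ξ := by
      rw [integral_pos_iff_support_of_nonneg_ae hGnn hGint]
      have hsupp : 0 < volume (Function.support h) := by
        by_contra hc
        push_neg at hc
        have h0 : volume (Function.support h) = 0 := le_antisymm (by simpa using hc) bot_le
        have hz : h =ᵐ[volume] 0 := by
          rw [Filter.EventuallyEq, MeasureTheory.ae_iff]
          simpa [Function.support] using h0
        have : ∫ ξ, h ξ = 0 := integral_eq_zero_of_ae hz
        linarith
      refine lt_of_lt_of_le hsupp (measure_mono_ae ?_)
      filter_upwards [hpos, hne0] with ξ hp hξ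
      intro hhξ
      have ht : (0:ℝ) < ‖ξ‖ ^ 2 := pow_pos (norm_pos_iff.mpr hξ) 2
      have hp' : 0 < h ξ := lt_of_le_of_ne hp (Ne.symm hhξ)
      have e1 : a * h ξ / (a + ‖ξ‖ ^ 2) < b * h ξ / (b + ‖ξ‖ ^ 2) := by
        rw [div_lt_div_iff₀ (by linarith) (by linarith)]
        nlinarith [mul_pos (mul_pos hp' ht) (sub_pos.mpr hab)]
      simp only [Function.mem_support, hG, hab', hbb']
      intro hzero
      rw [sub_eq_zero] at hzero
      rw [hzero] at e1
      exact lt_irrefl _ e1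
    rw [hG] at key
    rw [integral_sub (hintf b) (hintf a)] at key
    rw [hF a, hF b]; linarith
  -- continuity
  have hcont : Continuous F := by
    have hFeq : F = fun x : ℝ => ∫ ξ : EuclideanSpace ℝ (Fin 3),
        x * h ξ / (|x| + ‖ξ‖ ^ 2) := funext hF
    rw [hFeq]
    refine continuous_of_dominated (fun x => ((hintf x).aestronglyMeasurable))
      (fun x => Filter.Eventually.of_forall fun ξ => ?_) hint.abs ?_
    · rw [Real.norm_eq_abs]; exact hbd x ξ
    · filter_upwards [hne0] with ξ hξ
      have ht : (0:ℝ) < ‖ξ‖ ^ 2 := pow_pos (norm_pos_iff.mpr hξ) 2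
      exact (continuous_id.mul continuous_const).div
        (continuous_abs.add continuous_const) (fun x => by positivity)
  refine ⟨hodd, hcont, ?_⟩
  intro a b hab
  rcases le_or_gt 0 a with ha | ha
  · exact hcore a b ha hab
  · rcases le_or_gt b 0 with hb | hb
    · have hlt : F (-b) < F (-a) := hcore (-b) (-a) (by linarith) (by linarith)
      rw [hodd b, hodd a] at hlt
      linarith
    · have hF0 : F 0 = 0 := by
        have h0 := hodd 0
        simp only [neg_zero] at h0
        linarith
      have h1 : F 0 < F b := hcore 0 b le_rfl hb
      have h2 : F 0 < F (-a) := hcore 0 (-a) le_rfl (by linarith)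
      rw [hodd a] at h2
      rw [hF0] at h1 h2
      linarith
end
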